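/- arXiv:2006.13150 — 2 statements merged into one kernel-verified Lean document; each statement's English description precedes it below -/
import Mathlib

section
/- Let (C, ⊗, 1) be a monoidal category and let α > 0 be a real number. For any two monoidal presheaves 𝒦, 𝒦' on ℝ_{≥0} with values in C, the map sending a morphism of monoidal presheaves f : 𝒦 → 𝒦' to its restriction f|_{[0,α]} : 𝒦|_{[0,α]} → 𝒦'|_{[0,α]} is a bijection from Hom(𝒦, 𝒦') to Hom(𝒦|_{[0,α]}, 𝒦'|_{[0,α]}); that is, the restriction functor Fun^⊗(ℝ_{≥0}^op, C) → Fun^⊗([0,α]^op, C) is fully faithful. -/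
open CategoryTheory MonoidalCategory

universe v u

/-- Congruence for a family of objects indexed by points of a subset of `ℝ`. -/
theorem objCongr {C : Type u} [Category.{v} C] {I : Set ℝ} (f : ∀ a : ℝ, a ∈ I → C)
    {a b : ℝ} (h : a = b) (ha : a ∈ I) (hb : b ∈ I) : f a ha = f b hb := by
  subst h; rfl

/-- A monoidal presheaf on a subset `I ⊆ ℝ` (regarded as a poset category, with the
partially defined monoidal structure given by addition) with values in a monoidal
category `C`. -/
structure MonoidalPresheaf (C : Type u) [Category.{v} C] [MonoidalCategory C]
    (I : Set ℝ) where
  /-- the value at `a ∈ I` -/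
  obj : ∀ a : ℝ, a ∈ I → C
  /-- the restriction morphisms `ρ_{a,b} : K_b ⟶ K_a` for `a ≤ b` -/
  res : ∀ (a b : ℝ) (ha : a ∈ I) (hb : b ∈ I), a ≤ b → (obj b hb ⟶ obj a ha)
  res_id : ∀ (a : ℝ) (ha : a ∈ I), res a a ha ha le_rfl = 𝟙 (obj a ha)
  res_comp : ∀ (a b c : ℝ) (ha : a ∈ I) (hb : b ∈ I) (hc : c ∈ I)
      (hab : a ≤ b) (hbc : b ≤ c),
      res b c hb hc hbc ≫ res a b ha hb hab = res a c ha hc (hab.trans hbc)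
  /-- `φ0 : 1 ≅ K_0` -/
  unit : ∀ h0 : (0 : ℝ) ∈ I, 𝟙_ C ≅ obj 0 h0
  /-- `φ2(a,b) : K_a ⊗ K_b ≅ K_{a+b}` -/
  mul : ∀ (a b : ℝ) (ha : a ∈ I) (hb : b ∈ I) (hab : a + b ∈ I),
      obj a ha ⊗ obj b hb ≅ obj (a + b) hab
  /-- compatibility of `φ2` with the restriction morphisms -/
  mul_res : ∀ (a b a' b' : ℝ) (ha : a ∈ I) (hb : b ∈ I) (ha' : a' ∈ I) (hb' : b' ∈ I)
      (hab : a + b ∈ I) (hab' : a' + b' ∈ I) (haa' : a ≤ a') (hbb' : b ≤ b'),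
      (mul a' b' ha' hb' hab').hom ≫ res (a + b) (a' + b') hab hab' (add_le_add haa' hbb')
        = (res a a' ha ha' haa' ⊗ₘ res b b' hb hb' hbb') ≫ (mul a b ha hb hab).hom
  /-- associativity of `φ2` -/
  assoc : ∀ (a b c : ℝ) (ha : a ∈ I) (hb : b ∈ I) (hc : c ∈ I)
      (hab : a + b ∈ I) (hbc : b + c ∈ I) (habc : a + b + c ∈ I) (habc' : a + (b + c) ∈ I),
      (α_ (obj a ha) (obj b hb) (obj c hc)).hom ≫ (𝟙 (obj a ha) ⊗ₘ (mul b c hb hc hbc).hom)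
          ≫ (mul a (b + c) ha hbc habc').hom
        = ((mul a b ha hb hab).hom ⊗ₘ 𝟙 (obj c hc)) ≫ (mul (a + b) c hab hc habc).hom
          ≫ eqToHom (objCongr obj (add_assoc a b c) habc habc')
  /-- left unitality -/
  unit_mul : ∀ (a : ℝ) (ha : a ∈ I) (h0 : (0 : ℝ) ∈ I) (h0a : 0 + a ∈ I),
      ((unit h0).hom ⊗ₘ 𝟙 (obj a ha)) ≫ (mul 0 a h0 ha h0a).hom
        = (λ_ (obj a ha)).hom ≫ eqToHom (objCongr obj (zero_add a).symm ha h0a)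
  /-- right unitality -/
  mul_unit : ∀ (a : ℝ) (ha : a ∈ I) (h0 : (0 : ℝ) ∈ I) (ha0 : a + 0 ∈ I),
      (𝟙 (obj a ha) ⊗ₘ (unit h0).hom) ≫ (mul a 0 ha h0 ha0).hom
        = (ρ_ (obj a ha)).hom ≫ eqToHom (objCongr obj (add_zero a).symm ha ha0)

namespace MonoidalPresheaf

variable {C : Type u} [Category.{v} C] [MonoidalCategory C] {I : Set ℝ}

/-- A morphism of monoidal presheaves. -/
@[ext]
structure Hom (K K' : MonoidalPresheaf C I) where
  app : ∀ (a : ℝ) (ha : a ∈ I), K.obj a ha ⟶ K'.obj a ha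
  naturality : ∀ (a b : ℝ) (ha : a ∈ I) (hb : b ∈ I) (hab : a ≤ b),
      K.res a b ha hb hab ≫ app a ha = app b hb ≫ K'.res a b ha hb hab
  monoidal : ∀ (a b : ℝ) (ha : a ∈ I) (hb : b ∈ I) (hab : a + b ∈ I),
      (K.mul a b ha hb hab).hom ≫ app (a + b) hab
        = (app a ha ⊗ₘ app b hb) ≫ (K'.mul a b ha hb hab).hom

instance : Category (MonoidalPresheaf C I) where
  Hom K K' := Hom K K'
  id K :=
    { app := fun a ha => 𝟙 (K.obj a ha)
      naturality := by intros; simp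
      monoidal := by intros; simp }
  comp {K K' K''} f g :=
    { app := fun a ha => f.app a ha ≫ g.app a ha
      naturality := by
        intros a b ha hb hab
        rw [← Category.assoc, f.naturality, Category.assoc, g.naturality, Category.assoc]
      monoidal := by
        intros a b ha hb hab
        rw [← Category.assoc, f.monoidal, Category.assoc, g.monoidal, ← Category.assoc,
          tensorHom_comp_tensorHom] }
  id_comp f := by apply Hom.ext; funext a ha; simp
  comp_id f := by apply Hom.ext; funext a ha; simp
  assoc f g h := by apply Hom.ext; funext a ha; simp

end MonoidalPresheaf

/-- Restriction of a monoidal presheaf along an inclusion of subsets of `ℝ`. -/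
def MonoidalPresheaf.restrictObj {C : Type u} [Category.{v} C] [MonoidalCategory C]
    {I J : Set ℝ} (hIJ : I ⊆ J) (K : MonoidalPresheaf C J) : MonoidalPresheaf C I where
  obj a ha := K.obj a (hIJ ha)
  res a b ha hb hab := K.res a b (hIJ ha) (hIJ hb) hab
  res_id a ha := K.res_id a (hIJ ha)
  res_comp a b c ha hb hc hab hbc := K.res_comp a b c _ _ _ hab hbc
  unit h0 := K.unit (hIJ h0)
  mul a b ha hb hab := K.mul a b (hIJ ha) (hIJ hb) (hIJ hab)
  mul_res a b a' b' ha hb ha' hb' hab hab' haa' hbb' :=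
    K.mul_res a b a' b' _ _ _ _ _ _ haa' hbb'
  assoc a b c ha hb hc hab hbc habc habc' := K.assoc a b c _ _ _ _ _ _ _
  unit_mul a ha h0 h0a := K.unit_mul a _ _ _
  mul_unit a ha h0 ha0 := K.mul_unit a _ _ _

/-- The restriction functor `Fun^⊗(J^op, C) ⥤ Fun^⊗(I^op, C)` induced by an
inclusion `I ⊆ J` of subsets of `ℝ`. -/
def MonoidalPresheaf.restrictFunctor (C : Type u) [Category.{v} C] [MonoidalCategory C]
    {I J : Set ℝ} (hIJ : I ⊆ J) :
    MonoidalPresheaf C J ⥤ MonoidalPresheaf C I where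
  obj K := MonoidalPresheaf.restrictObj hIJ K
  map {K K'} f :=
    { app := fun a ha => f.app a (hIJ ha)
      naturality := fun a b ha hb hab => f.naturality a b _ _ hab
      monoidal := fun a b ha hb hab => f.monoidal a b _ _ _ }
  map_id K := rfl
  map_comp f g := rfl

/-! Every `a ≥ 0` is reached from `[0, α]` by adding `α` finitely often, and `φ2(a - α, α)`
identifies `K_a` with `K_{a-α} ⊗ K_α`. Hence a morphism is determined by its restriction, and
a morphism `g` on `[0, α]` extends by the recursion `E_a = φ2 ∘ (E_{a-α} ⊗ g_α) ∘ φ2⁻¹`.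
Multiplicativity of `E` follows by induction, using associativity of `φ2` to regroup
`a + b + c` in either direction; naturality then follows from multiplicativity, since
`ρ_{a,b}` is `ρ_{a,a} ⊗ ρ_{0,b-a}` transported along `φ2`. -/

theorem Ici_induction_step {α : ℝ} (hα : 0 < α) {P : ∀ a : ℝ, a ∈ Set.Ici 0 → Prop}
    (base : ∀ a (ha : a ∈ Set.Ici 0), a ≤ α → P a ha)
    (step : ∀ a (ha : a ∈ Set.Ici 0) (h : α < a), P (a - α) (sub_nonneg.2 h.le) → P a ha)
    (a : ℝ) (ha : a ∈ Set.Ici 0) : P a ha := by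
  obtain ⟨n, hn⟩ := Archimedean.arch a hα
  induction n generalizing a with
  | zero => exact base a ha (by simp at hn; linarith [Set.mem_Ici.1 ha])
  | succ n ih =>
    rcases le_or_gt a α with h | h
    · exact base a ha h
    · exact step a ha h (ih _ _ (by rw [succ_nsmul] at hn; linarith))

namespace MonoidalPresheaf

variable {C : Type u} [Category.{v} C] [MonoidalCategory C] {I : Set ℝ}

/-- `K.mul` with the target index given only up to `a + b = c`: this absorbs all the transport
along equalities of indices. -/
def mulOfEq (K : MonoidalPresheaf C I) {a b c : ℝ} (ha : a ∈ I) (hb : b ∈ I) (hc : c ∈ I)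
    (h : a + b = c) : K.obj a ha ⊗ K.obj b hb ≅ K.obj c hc :=
  K.mul a b ha hb (h ▸ hc) ≪≫ eqToIso (objCongr K.obj h _ hc)

@[simp]
theorem mulOfEq_rfl (K : MonoidalPresheaf C I) {a b : ℝ} (ha : a ∈ I) (hb : b ∈ I)
    (hab : a + b ∈ I) : K.mulOfEq ha hb hab rfl = K.mul a b ha hb hab := by
  simp [mulOfEq]

theorem mulOfEq_assoc (K : MonoidalPresheaf C I) {a b c ab bc abc : ℝ} {ha : a ∈ I}
    {hb : b ∈ I} {hc : c ∈ I} {hab : ab ∈ I} {hbc : bc ∈ I} (habc : abc ∈ I)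
    (h₁ : a + b = ab) (h₂ : ab + c = abc) (h₃ : b + c = bc) (h₄ : a + bc = abc) :
    ((K.mulOfEq ha hb hab h₁).hom ▷ K.obj c hc) ≫ (K.mulOfEq hab hc habc h₂).hom =
      (α_ _ _ _).hom ≫ (K.obj a ha ◁ (K.mulOfEq hb hc hbc h₃).hom) ≫
        (K.mulOfEq ha hbc habc h₄).hom := by
  subst h₁ h₂ h₃
  have := K.assoc a b c ha hb hc hab hbc habc (h₄ ▸ habc)
  simp only [id_tensorHom, tensorHom_id] at this
  simp only [mulOfEq, Iso.trans_hom, eqToIso.hom, eqToHom_refl, Category.comp_id]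
  rw [reassoc_of% this]
  simp

theorem mulOfEq_res (K : MonoidalPresheaf C I) {a b c a' b' c' : ℝ} {ha : a ∈ I} {hb : b ∈ I}
    {hc : c ∈ I} {ha' : a' ∈ I} {hb' : b' ∈ I} {hc' : c' ∈ I} (h : a + b = c)
    (h' : a' + b' = c') (haa' : a ≤ a') (hbb' : b ≤ b') (hcc' : c ≤ c') :
    (K.mulOfEq ha' hb' hc' h').hom ≫ K.res c c' hc hc' hcc' =
      (K.res a a' ha ha' haa' ⊗ₘ K.res b b' hb hb' hbb') ≫ (K.mulOfEq ha hb hc h).hom := by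
  subst h h'
  simpa using K.mul_res a b a' b' ha hb ha' hb' hc hc' haa' hbb'

section Family

variable {K K' : MonoidalPresheaf C I} (t : ∀ a (ha : a ∈ I), K.obj a ha ⟶ K'.obj a ha)

def IsMulAt {a b c : ℝ} (ha : a ∈ I) (hb : b ∈ I) (hc : c ∈ I) (h : a + b = c) : Prop :=
  (K.mulOfEq ha hb hc h).hom ≫ t c hc = (t a ha ⊗ₘ t b hb) ≫ (K'.mulOfEq ha hb hc h).hom

def IsNatAt {a b : ℝ} (ha : a ∈ I) (hb : b ∈ I) (hab : a ≤ b) : Prop :=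
  K.res a b ha hb hab ≫ t a ha = t b hb ≫ K'.res a b ha hb hab

variable {t}

theorem IsMulAt.regroup_right {a b c ab bc abc : ℝ} {ha : a ∈ I} {hb : b ∈ I} {hc : c ∈ I}
    {hab : ab ∈ I} {hbc : bc ∈ I} {habc : abc ∈ I} {h₁ : a + b = ab} {h₂ : ab + c = abc}
    {h₃ : b + c = bc} (m₁ : IsMulAt t ha hb hab h₁) (m₂ : IsMulAt t hab hc habc h₂)
    (m₃ : IsMulAt t hb hc hbc h₃) (h₄ : a + bc = abc) : IsMulAt t ha hbc habc h₄ := by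
  unfold IsMulAt at *
  rw [← cancel_epi ((α_ _ _ _).hom ≫ (K.obj a ha ◁ (K.mulOfEq hb hc hbc h₃).hom))]
  simp only [Category.assoc]
  rw [← reassoc_of% (K.mulOfEq_assoc (hab := hab) habc h₁ h₂ h₃ h₄), m₂,
    whiskerRight_comp_tensorHom_assoc, m₁, ← tensorHom_comp_whiskerRight_assoc,
    K'.mulOfEq_assoc habc h₁ h₂ h₃ h₄, associator_naturality_assoc,
    tensorHom_comp_whiskerLeft_assoc, ← m₃, whiskerLeft_comp_tensorHom_assoc]

theorem IsMulAt.regroup_left {a b c ab bc abc : ℝ} {ha : a ∈ I} {hb : b ∈ I} {hc : c ∈ I}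
    {hab : ab ∈ I} {hbc : bc ∈ I} {habc : abc ∈ I} {h₃ : b + c = bc} {h₄ : a + bc = abc}
    {h₁ : a + b = ab} (m₃ : IsMulAt t hb hc hbc h₃) (m₄ : IsMulAt t ha hbc habc h₄)
    (m₁ : IsMulAt t ha hb hab h₁) (h₂ : ab + c = abc) : IsMulAt t hab hc habc h₂ := by
  unfold IsMulAt at *
  rw [← cancel_epi ((K.mulOfEq ha hb hab h₁).hom ▷ K.obj c hc)]
  rw [reassoc_of% (K.mulOfEq_assoc (hbc := hbc) habc h₁ h₂ h₃ h₄), m₄,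
    whiskerLeft_comp_tensorHom_assoc, m₃, ← tensorHom_comp_whiskerLeft_assoc,
    ← associator_naturality_assoc, ← K'.mulOfEq_assoc (hab := hab) habc h₁ h₂ h₃ h₄,
    tensorHom_comp_whiskerRight_assoc, ← m₁, whiskerRight_comp_tensorHom_assoc]

theorem isNatAt_refl (t : ∀ a (ha : a ∈ I), K.obj a ha ⟶ K'.obj a ha) {a : ℝ} (ha : a ∈ I) :
    IsNatAt t ha ha le_rfl := by
  simp [IsNatAt, res_id]

theorem IsNatAt.trans {a b c : ℝ} {ha : a ∈ I} {hb : b ∈ I} {hc : c ∈ I} {hab : a ≤ b}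
    {hbc : b ≤ c} (n₁ : IsNatAt t ha hb hab) (n₂ : IsNatAt t hb hc hbc) :
    IsNatAt t ha hc (hab.trans hbc) := by
  unfold IsNatAt at *
  rw [← K.res_comp a b c ha hb hc hab hbc, ← K'.res_comp a b c ha hb hc hab hbc,
    Category.assoc, n₁, reassoc_of% n₂]

theorem IsNatAt.add {a b c a' b' c' : ℝ} {ha : a ∈ I} {hb : b ∈ I} {hc : c ∈ I} {ha' : a' ∈ I}
    {hb' : b' ∈ I} {hc' : c' ∈ I} {haa' : a ≤ a'} {hbb' : b ≤ b'} {h : a + b = c}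
    {h' : a' + b' = c'} (n₁ : IsNatAt t ha ha' haa') (n₂ : IsNatAt t hb hb' hbb')
    (m : IsMulAt t ha hb hc h) (m' : IsMulAt t ha' hb' hc' h') (hcc' : c ≤ c') :
    IsNatAt t hc hc' hcc' := by
  unfold IsNatAt IsMulAt at *
  rw [← cancel_epi (K.mulOfEq ha' hb' hc' h').hom,
    reassoc_of% (K.mulOfEq_res (ha := ha) (hb := hb) h h' haa' hbb' hcc'), m,
    tensorHom_comp_tensorHom_assoc, n₁, n₂, ← tensorHom_comp_tensorHom_assoc,
    ← K'.mulOfEq_res h h' haa' hbb' hcc', reassoc_of% m']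

end Family

theorem Hom.mulOfEq_hom_comp_app {K K' : MonoidalPresheaf C I} (f : Hom K K') {a b c : ℝ}
    (ha : a ∈ I) (hb : b ∈ I) (hc : c ∈ I) (h : a + b = c) :
    (K.mulOfEq ha hb hc h).hom ≫ f.app c hc =
      (f.app a ha ⊗ₘ f.app b hb) ≫ (K'.mulOfEq ha hb hc h).hom := by
  subst h
  simpa using f.monoidal a b ha hb hc

theorem Hom.app_eq_app_of_add_eq {K K' : MonoidalPresheaf C I} (f f' : Hom K K') {a b c : ℝ}
    {ha : a ∈ I} {hb : b ∈ I} (hc : c ∈ I) (h : a + b = c) (ea : f.app a ha = f'.app a ha)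
    (eb : f.app b hb = f'.app b hb) : f.app c hc = f'.app c hc := by
  rw [← cancel_epi (K.mulOfEq ha hb hc h).hom, f.mulOfEq_hom_comp_app,
    f'.mulOfEq_hom_comp_app, ea, eb]

section Extension

variable {α : ℝ} (hα : 0 < α) {K K' : MonoidalPresheaf C (Set.Ici 0)}
  (g : Hom (K.restrictObj (Set.Icc_subset_Ici_self : Set.Icc 0 α ⊆ _))
    (K'.restrictObj Set.Icc_subset_Ici_self))

noncomputable def extendApp (a : ℝ) (ha : a ∈ Set.Ici 0) : K.obj a ha ⟶ K'.obj a ha :=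
  if h : a ≤ α then g.app a ⟨ha, h⟩
  else
    have hc : a - α ∈ Set.Ici 0 := sub_nonneg.2 (le_of_not_ge h)
    (K.mulOfEq hc hα.le ha (sub_add_cancel a α)).inv ≫
      (extendApp (a - α) hc ⊗ₘ g.app α ⟨hα.le, le_rfl⟩) ≫
      (K'.mulOfEq hc hα.le ha (sub_add_cancel a α)).hom
termination_by ⌈a / α⌉₊
decreasing_by
  have : 1 < a / α := (one_lt_div hα).2 (lt_of_not_ge h)
  have : 0 < ⌈a / α⌉₊ := Nat.lt_ceil.2 (by simp; linarith)
  rw [sub_div, div_self hα.ne', Nat.ceil_sub_one]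
  omega

theorem extendApp_of_le {a : ℝ} (ha : a ∈ Set.Ici 0) (h : a ≤ α) :
    extendApp hα g a ha = g.app a ⟨ha, h⟩ := by
  rw [extendApp]
  exact dif_pos h

theorem extendApp_of_lt {a : ℝ} (ha : a ∈ Set.Ici 0) (h : α < a) :
    extendApp hα g a ha =
      (K.mulOfEq (sub_nonneg.2 h.le) hα.le ha (sub_add_cancel a α)).inv ≫
        (extendApp hα g (a - α) (sub_nonneg.2 h.le) ⊗ₘ g.app α ⟨hα.le, le_rfl⟩) ≫
        (K'.mulOfEq (sub_nonneg.2 h.le) hα.le ha (sub_add_cancel a α)).hom := by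
  rw [extendApp]
  exact dif_neg (not_le.2 h)

theorem isMulAt_extendApp_of_le {a b c : ℝ} (ha : a ∈ Set.Ici 0) (hb : b ∈ Set.Ici 0)
    (hc : c ∈ Set.Ici 0) (h : a + b = c) (hcα : c ≤ α) :
    IsMulAt (extendApp hα g) ha hb hc h := by
  have haα : a ≤ α := by linarith [Set.mem_Ici.1 hb]
  have hbα : b ≤ α := by linarith [Set.mem_Ici.1 ha]
  unfold IsMulAt
  rw [extendApp_of_le hα g ha haα, extendApp_of_le hα g hb hbα, extendApp_of_le hα g hc hcα]
  exact g.mulOfEq_hom_comp_app ⟨ha, haα⟩ ⟨hb, hbα⟩ ⟨hc, hcα⟩ h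

theorem isMulAt_extendApp_alpha {a c : ℝ} (ha : a ∈ Set.Ici 0) (hc : c ∈ Set.Ici 0)
    (h : a + α = c) : IsMulAt (extendApp hα g) ha hα.le hc h := by
  by_cases hcα : c ≤ α
  · exact isMulAt_extendApp_of_le hα g ha hα.le hc h hcα
  obtain rfl : a = c - α := by linarith
  unfold IsMulAt
  rw [extendApp_of_le hα g (Set.mem_Ici.2 hα.le) le_rfl,
    extendApp_of_lt hα g hc (lt_of_not_ge hcα)]
  exact Iso.hom_inv_id_assoc _ _

theorem isMulAt_extendApp_of_right_le {a b c : ℝ} (ha : a ∈ Set.Ici 0) (hb : b ∈ Set.Ici 0)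
    (hc : c ∈ Set.Ici 0) (h : a + b = c) (hbα : b ≤ α) :
    IsMulAt (extendApp hα g) ha hb hc h := by
  have hα' : α ∈ Set.Ici 0 := hα.le
  have base : ∀ a (ha : a ∈ Set.Ici 0) c (hc : c ∈ Set.Ici 0) (h : a + b = c), a ≤ α →
      IsMulAt (extendApp hα g) ha hb hc h := by
    intro a ha c hc h haα
    by_cases hcα : c ≤ α
    · exact isMulAt_extendApp_of_le hα g ha hb hc h hcα
    have hp : α - b ∈ Set.Ici 0 := sub_nonneg.2 hbα
    have hq : c - α ∈ Set.Ici 0 := sub_nonneg.2 (le_of_not_ge hcα)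
    -- split `a = (c - α) + (α - b)`, so that `(α - b) + b = α` and `(c - α) + α = c`
    exact (isMulAt_extendApp_of_le hα g hp hb hα' (sub_add_cancel α b) le_rfl).regroup_left
      (isMulAt_extendApp_alpha hα g hq hc (sub_add_cancel c α))
      (isMulAt_extendApp_of_le hα g hq hp ha (by linarith) haα) h
  induction a, ha using Ici_induction_step hα generalizing c with
  | base a ha haα => exact base a ha c hc h haα
  | step a ha hαa ih =>
    have hab : a - α + b ∈ Set.Ici 0 := add_nonneg (sub_nonneg.2 hαa.le) hb
    have hba : b + α ∈ Set.Ici 0 := Set.mem_Ici.2 (add_nonneg hb hα')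
    -- regroup `((a - α) + b) + α` as `(a - α) + (b + α)`, then as `((a - α) + α) + b`
    have m := (ih hab rfl).regroup_right
      (isMulAt_extendApp_alpha hα g hab hc (by linarith))
      (isMulAt_extendApp_alpha hα g hb hba rfl) (by linarith)
    exact (base α hα' _ hba (add_comm α b) le_rfl).regroup_left m
      (isMulAt_extendApp_alpha hα g _ ha (sub_add_cancel a α)) h

theorem isMulAt_extendApp {a b c : ℝ} (ha : a ∈ Set.Ici 0) (hb : b ∈ Set.Ici 0)
    (hc : c ∈ Set.Ici 0) (h : a + b = c) : IsMulAt (extendApp hα g) ha hb hc h := by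
  induction b, hb using Ici_induction_step hα generalizing c with
  | base b hb hbα => exact isMulAt_extendApp_of_right_le hα g ha hb hc h hbα
  | step b hb hαb ih =>
    have had : a + (b - α) ∈ Set.Ici 0 := add_nonneg ha (sub_nonneg.2 hαb.le)
    exact (ih had rfl).regroup_right (isMulAt_extendApp_alpha hα g had hc (by linarith))
      (isMulAt_extendApp_alpha hα g _ hb (sub_add_cancel b α)) h

theorem isNatAt_extendApp_of_le {a b : ℝ} (ha : a ∈ Set.Ici 0) (hb : b ∈ Set.Ici 0)
    (hab : a ≤ b) (hbα : b ≤ α) : IsNatAt (extendApp hα g) ha hb hab := by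
  unfold IsNatAt
  rw [extendApp_of_le hα g ha (hab.trans hbα), extendApp_of_le hα g hb hbα]
  exact g.naturality a b ⟨ha, hab.trans hbα⟩ ⟨hb, hbα⟩ hab

theorem isNatAt_extendApp_zero {d : ℝ} (hd : d ∈ Set.Ici 0) :
    IsNatAt (extendApp hα g) Set.self_mem_Ici hd hd := by
  induction d, hd using Ici_induction_step hα with
  | base d hd hdα => exact isNatAt_extendApp_of_le hα g _ hd hd hdα
  | step d hd hαd ih =>
    have hc : d - α ∈ Set.Ici 0 := sub_nonneg.2 hαd.le
    have hα' : α ∈ Set.Ici 0 := hα.le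
    exact ih.trans <| (isNatAt_refl _ hc).add
      (isNatAt_extendApp_of_le hα g Set.self_mem_Ici hα' hα.le le_rfl)
      (isMulAt_extendApp hα g hc Set.self_mem_Ici hc (add_zero _))
      (isMulAt_extendApp hα g hc hα' hd (sub_add_cancel d α)) (sub_le_self d hα.le)

theorem isNatAt_extendApp {a b : ℝ} (ha : a ∈ Set.Ici 0) (hb : b ∈ Set.Ici 0) (hab : a ≤ b) :
    IsNatAt (extendApp hα g) ha hb hab :=
  (isNatAt_refl _ ha).add (isNatAt_extendApp_zero hα g (sub_nonneg.2 hab))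
    (isMulAt_extendApp hα g ha _ ha (add_zero a))
    (isMulAt_extendApp hα g ha _ hb (add_sub_cancel a b)) hab

noncomputable def extend : Hom K K' where
  app := extendApp hα g
  naturality _ _ ha hb hab := isNatAt_extendApp hα g ha hb hab
  monoidal _ _ ha hb hab := by simpa [IsMulAt] using isMulAt_extendApp hα g ha hb hab rfl

end Extension

theorem Hom.ext_of_app_eq_of_le {α : ℝ} (hα : 0 < α) {K K' : MonoidalPresheaf C (Set.Ici 0)}
    {f f' : Hom K K'} (h : ∀ a ha, a ≤ α → f.app a ha = f'.app a ha) : f = f' := by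
  ext a ha
  induction a, ha using Ici_induction_step hα with
  | base a ha haα => exact h a ha haα
  | step a ha _ ih =>
    exact f.app_eq_app_of_add_eq f' ha (sub_add_cancel a α) ih (h α hα.le le_rfl)

end MonoidalPresheaf

/-- The restriction functor `Fun^⊗(ℝ_{≥0}^op, C) ⥤ Fun^⊗([0,α]^op, C)`
is fully faithful: for any two monoidal presheaves `𝒦, 𝒦'` on `ℝ_{≥0}`, restriction of
morphisms is a bijection on Hom-sets. -/
theorem restrictFunctor_map_bijective (C : Type u) [Category.{v} C] [MonoidalCategory C]
    (α : ℝ) (hα : 0 < α) (K K' : MonoidalPresheaf C (Set.Ici (0 : ℝ))) :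
    Function.Bijective (fun f : K ⟶ K' =>
      (MonoidalPresheaf.restrictFunctor C
        (show Set.Icc (0 : ℝ) α ⊆ Set.Ici 0 from fun _ hx => hx.1)).map f) := by
  refine ⟨fun f f' hff => ?_, fun g => ⟨MonoidalPresheaf.extend hα g, ?_⟩⟩
  · exact MonoidalPresheaf.Hom.ext_of_app_eq_of_le hα fun a ha haα =>
      congr_fun₂ (congrArg MonoidalPresheaf.Hom.app hff) a ⟨ha, haα⟩
  · exact MonoidalPresheaf.Hom.ext (funext₂ fun a ha =>
      MonoidalPresheaf.extendApp_of_le hα g ha.1 ha.2)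
end

section
/- Let E be a real inner product space of dimension at least 2, and let x, z ∈ E be unit vectors (‖x‖ = ‖z‖ = 1). Let a, b ≥ 0 and suppose that the angle between x and z satisfies angle(x,z) ≤ a + b, where angle(x,z) = arccos⟨x,z⟩. Then there exists a unit vector y ∈ E with angle(x,y) ≤ a and angle(y,z) ≤ b. -/
/-!
Write `z = cos θ • x + sin θ • w` with `θ = angle x z` and `w` a unit vector orthogonal to `x`
(when `sin θ = 0` any such `w` will do, and one exists because `dim E ≥ 2`). Along the great
circle `t ↦ cos t • x + sin t • w` the angle between the points at parameters `s ≤ t ≤ s + π`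
is `t - s`, so if `a < θ` the point at parameter `a` works; otherwise take `y = z`.
-/

open InnerProductGeometry Real RealInnerProductSpace

section GreatCircle

variable {E : Type*} [NormedAddCommGroup E] [InnerProductSpace ℝ E]

noncomputable def greatCircle (x w : E) (t : ℝ) : E := cos t • x + sin t • w

@[simp]
theorem greatCircle_zero (x w : E) : greatCircle x w 0 = x := by
  simp [greatCircle]

variable {x w : E} (hx : ‖x‖ = 1) (hw : ‖w‖ = 1) (hxw : ⟪x, w⟫ = 0)
include hx hw hxw

theorem inner_greatCircle (s t : ℝ) :
    ⟪greatCircle x w s, greatCircle x w t⟫ = cos (t - s) := by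
  have hwx : ⟪w, x⟫ = 0 := by rw [real_inner_comm, hxw]
  simp only [greatCircle, inner_add_left, inner_add_right, real_inner_smul_left,
    real_inner_smul_right, real_inner_self_eq_norm_sq, hx, hw, hxw, hwx, cos_sub]
  ring

theorem norm_greatCircle (t : ℝ) : ‖greatCircle x w t‖ = 1 := by
  have h := inner_greatCircle hx hw hxw t t
  rw [sub_self, cos_zero, real_inner_self_eq_norm_sq] at h
  exact (pow_eq_one_iff_of_nonneg (norm_nonneg _) two_ne_zero).mp h

theorem angle_greatCircle {s t : ℝ} (hst : s ≤ t) (hts : t ≤ s + π) :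
    angle (greatCircle x w s) (greatCircle x w t) = t - s := by
  rw [angle, inner_greatCircle hx hw hxw, norm_greatCircle hx hw hxw,
    norm_greatCircle hx hw hxw, mul_one, div_one, arccos_cos] <;> linarith

end GreatCircle

section

variable {E : Type*} [NormedAddCommGroup E] [InnerProductSpace ℝ E]

theorem exists_norm_eq_one_inner_eq_zero (hrank : 2 ≤ Module.rank ℝ E) (x : E) :
    ∃ w : E, ‖w‖ = 1 ∧ ⟪x, w⟫ = 0 := by
  have hspan : (ℝ ∙ x) ≠ ⊤ := by
    intro htop
    have hle := rank_span_le (R := ℝ) ({x} : Set E)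
    rw [htop, rank_top, Cardinal.mk_singleton] at hle
    exact absurd (hrank.trans hle) (by norm_num)
  obtain ⟨v, hv, hv0⟩ := Submodule.exists_mem_ne_zero_of_ne_bot
    (mt Submodule.orthogonal_eq_bot_iff.mp hspan)
  refine ⟨‖v‖⁻¹ • v, norm_smul_inv_norm hv0, ?_⟩
  rw [real_inner_smul_right, Submodule.mem_orthogonal_singleton_iff_inner_right.mp hv, mul_zero]

theorem exists_eq_greatCircle_angle (hrank : 2 ≤ Module.rank ℝ E) {x z : E}
    (hx : ‖x‖ = 1) (hz : ‖z‖ = 1) :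
    ∃ w : E, ‖w‖ = 1 ∧ ⟪x, w⟫ = 0 ∧ z = greatCircle x w (angle x z) := by
  set θ := angle x z
  set v := z - cos θ • x
  have hxz : ⟪x, z⟫ = cos θ := by rw [inner_eq_cos_angle_of_norm_eq_one hx hz]
  have hxv : ⟪x, v⟫ = 0 := by
    rw [inner_sub_right, real_inner_smul_right, real_inner_self_eq_norm_sq, hx, hxz]; ring
  have hv : ‖v‖ = sin θ := by
    have : ‖v‖ ^ 2 = sin θ ^ 2 := by
      rw [← real_inner_self_eq_norm_sq]
      simp only [v, inner_sub_left, inner_sub_right, real_inner_smul_left, real_inner_smul_right]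
      rw [real_inner_self_eq_norm_sq, real_inner_self_eq_norm_sq, hx, hz, real_inner_comm x z, hxz,
        sin_sq]
      ring
    exact (pow_left_inj₀ (norm_nonneg v) (sin_nonneg_of_nonneg_of_le_pi (angle_nonneg x z)
      (angle_le_pi x z)) two_ne_zero).mp this
  have hz_of_smul : ∀ w, sin θ • w = v → z = greatCircle x w θ := fun w hw => by
    rw [greatCircle, hw, add_sub_cancel]
  rcases eq_or_ne v 0 with hv0 | hv0
  · obtain ⟨w, hw, hxw⟩ := exists_norm_eq_one_inner_eq_zero hrank x
    exact ⟨w, hw, hxw, hz_of_smul w (by rw [← hv, hv0, norm_zero, zero_smul])⟩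
  · refine ⟨‖v‖⁻¹ • v, norm_smul_inv_norm hv0, ?_, hz_of_smul _ ?_⟩
    · rw [real_inner_smul_right, hxv, mul_zero]
    · rw [← hv, smul_inv_smul₀ (norm_ne_zero_iff.mpr hv0)]

end

/-- Let `E` be a real inner product space of dimension at least `2`
and let `x, z ∈ E` be unit vectors.  If `a, b ≥ 0` and the angle between `x` and `z`
is at most `a + b`, then there exists a unit vector `y` with `angle x y ≤ a` and
`angle y z ≤ b`. -/
theorem sphere_angle_triangle_decomposition (E : Type*) [NormedAddCommGroup E]
    [InnerProductSpace ℝ E] (hrank : 2 ≤ Module.rank ℝ E)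
    (x z : E) (hx : ‖x‖ = 1) (hz : ‖z‖ = 1) (a b : ℝ) (ha : 0 ≤ a) (hb : 0 ≤ b)
    (h : InnerProductGeometry.angle x z ≤ a + b) :
    ∃ y : E, ‖y‖ = 1 ∧ InnerProductGeometry.angle x y ≤ a
      ∧ InnerProductGeometry.angle y z ≤ b := by
  by_cases hza : angle x z ≤ a
  · exact ⟨z, hz, hza, by rwa [angle_self (norm_ne_zero_iff.mp (hz ▸ one_ne_zero))]⟩
  obtain ⟨w, hw, hxw, hz_eq⟩ := exists_eq_greatCircle_angle hrank hx hz
  have hθπ := angle_le_pi x z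
  refine ⟨greatCircle x w a, norm_greatCircle hx hw hxw a, ?_, ?_⟩
  · calc angle x (greatCircle x w a) = angle (greatCircle x w 0) (greatCircle x w a) := by
          rw [greatCircle_zero]
      _ ≤ a := by rw [angle_greatCircle hx hw hxw ha (by linarith), sub_zero]
  · rw [hz_eq, angle_greatCircle hx hw hxw (by linarith) (by linarith)]
    linarith
end
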